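/- arXiv:2401.00108 — 3 statements merged into one kernel-verified Lean document; each statement's English description precedes it below -/
import Mathlib

section
/- Let F be (μ_c, μ_H)-hidden strongly convex on X with μ_H > 0, and let x* ∈ X be the minimizer of F over X. Then F satisfies the quadratic growth condition F(x) − F(x*) ≥ (μ_H μ_c² / 2)‖x − x*‖² for every x ∈ X; in particular, the minimizer x* is unique. -/
open MeasureTheory
open scoped RealInnerProductSpace

noncomputable section

/-- `F` is hidden convex on `X` with moduli `μc > 0` and `μH ≥ 0`, witnessed by the convex
set `U`, the bijection `c : X → U` satisfying `‖c x - c y‖ ≥ μc * ‖x - y‖`, and the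
(`μH`-strongly) convex function `H : U → ℝ` with `F = H ∘ c` on `X`, where `H` attains its
minimum over `U` at `ustar`. -/
def HiddenConvex {d : ℕ} (μc μH : ℝ) (X U : Set (EuclideanSpace ℝ (Fin d)))
    (c : EuclideanSpace ℝ (Fin d) → EuclideanSpace ℝ (Fin d)) (H F : EuclideanSpace ℝ (Fin d) → ℝ) (ustar : EuclideanSpace ℝ (Fin d)) : Prop :=
  Convex ℝ U ∧ Set.BijOn c X U ∧
    (∀ x ∈ X, ∀ y ∈ X, μc * ‖x - y‖ ≤ ‖c x - c y‖) ∧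
    (∀ x ∈ X, F x = H (c x)) ∧
    (∀ u ∈ U, ∀ v ∈ U, ∀ t ∈ Set.Icc (0 : ℝ) 1,
      H ((1 - t) • u + t • v) ≤
        (1 - t) * H u + t * H v - (1 - t) * t * μH / 2 * ‖u - v‖ ^ 2) ∧
    ustar ∈ U ∧ ∀ u ∈ U, H ustar ≤ H u

/-! Strong convexity at a minimizer: comparing `f x₀ ≤ f ((1 - t) x₀ + t y)` with the
strong-convexity bound and dividing by `t` gives `(1 - t) m/2 ‖y - x₀‖² ≤ f y - f x₀`; letting
`t → 0⁺` yields quadratic growth of `f` around `x₀`. Under hidden strong convexity this growth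
is transported from `U` back to `X` through `c`, which expands distances by at least `μc`. -/

section StrongConvexity

variable {E : Type*} [NormedAddCommGroup E] [NormedSpace ℝ E] {s : Set E} {m : ℝ} {f : E → ℝ}
  {x₀ y : E}

lemma StrongConvexOn.one_sub_mul_le_of_isMinOn (hf : StrongConvexOn s m f)
    (hmin : IsMinOn f s x₀) (hx₀ : x₀ ∈ s) (hy : y ∈ s) {t : ℝ} (ht₀ : 0 < t) (ht₁ : t ≤ 1) :
    (1 - t) * (m / 2 * ‖y - x₀‖ ^ 2) ≤ f y - f x₀ := by
  have hconv := hf.2 hx₀ hy (sub_nonneg.2 ht₁) ht₀.le (sub_add_cancel 1 t)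
  have hle : f x₀ ≤ f ((1 - t) • x₀ + t • y) :=
    hmin (hf.1 hx₀ hy (sub_nonneg.2 ht₁) ht₀.le (sub_add_cancel 1 t))
  rw [norm_sub_rev] at hconv
  simp only [smul_eq_mul] at hconv
  refine le_of_mul_le_mul_left ?_ ht₀
  linarith

open Filter Topology in
lemma StrongConvexOn.quadratic_growth_of_isMinOn (hf : StrongConvexOn s m f)
    (hmin : IsMinOn f s x₀) (hx₀ : x₀ ∈ s) (hy : y ∈ s) :
    m / 2 * ‖y - x₀‖ ^ 2 ≤ f y - f x₀ := by
  have hlim : Tendsto (fun t : ℝ ↦ (1 - t) * (m / 2 * ‖y - x₀‖ ^ 2)) (𝓝[>] 0)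
      (𝓝 (m / 2 * ‖y - x₀‖ ^ 2)) := by
    have hcont : Continuous fun t : ℝ ↦ (1 - t) * (m / 2 * ‖y - x₀‖ ^ 2) := by fun_prop
    simpa using (hcont.tendsto 0).mono_left nhdsWithin_le_nhds
  refine le_of_tendsto hlim ?_
  filter_upwards [Ioc_mem_nhdsGT one_pos] with t ⟨ht₀, ht₁⟩
  exact hf.one_sub_mul_le_of_isMinOn hmin hx₀ hy ht₀ ht₁

end StrongConvexity

section HiddenConvex

variable {d : ℕ} {μc μH : ℝ} {X U : Set (EuclideanSpace ℝ (Fin d))}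
  {c : EuclideanSpace ℝ (Fin d) → EuclideanSpace ℝ (Fin d)} {H F : EuclideanSpace ℝ (Fin d) → ℝ}
  {ustar : EuclideanSpace ℝ (Fin d)}

lemma HiddenConvex.strongConvexOn (hHC : HiddenConvex μc μH X U c H F ustar) :
    StrongConvexOn U μH H := by
  refine ⟨hHC.1, fun u hu v hv a b ha hb hab ↦ ?_⟩
  obtain rfl : a = 1 - b := by linarith
  have h := hHC.2.2.2.2.1 u hu v hv b ⟨hb, by linarith⟩
  simp only [smul_eq_mul]
  linarith

lemma HiddenConvex.isMinOn (hHC : HiddenConvex μc μH X U c H F ustar) : IsMinOn H U ustar :=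
  hHC.2.2.2.2.2.2

lemma HiddenConvex.quadratic_growth (hHC : HiddenConvex μc μH X U c H F ustar)
    (hμc : 0 ≤ μc) (hμH : 0 ≤ μH) {xstar x : EuclideanSpace ℝ (Fin d)} (hxstar : xstar ∈ X)
    (hcxstar : c xstar = ustar) (hx : x ∈ X) :
    μH * μc ^ 2 / 2 * ‖x - xstar‖ ^ 2 ≤ F x - F xstar := by
  have ⟨_, hbij, hexpand, hFH, _, hustar, _⟩ := hHC
  have hgrowth := hHC.strongConvexOn.quadratic_growth_of_isMinOn hHC.isMinOn hustar (hbij.1 hx)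
  have hsq : (μc * ‖x - xstar‖) ^ 2 ≤ ‖c x - ustar‖ ^ 2 := by
    rw [← hcxstar]
    exact pow_le_pow_left₀ (by positivity) (hexpand x hx xstar hxstar) 2
  rw [hFH x hx, hFH xstar hxstar, hcxstar]
  calc μH * μc ^ 2 / 2 * ‖x - xstar‖ ^ 2 = μH / 2 * (μc * ‖x - xstar‖) ^ 2 := by ring
    _ ≤ μH / 2 * ‖c x - ustar‖ ^ 2 := by gcongr
    _ ≤ H (c x) - H ustar := hgrowth

end HiddenConvex

/-- Hidden strong convexity implies quadratic growth; in particular the minimizer is unique. -/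
theorem quadratic_growth {d : ℕ}
    (X U : Set (EuclideanSpace ℝ (Fin d)))
    (F H : EuclideanSpace ℝ (Fin d) → ℝ) (c : EuclideanSpace ℝ (Fin d) → EuclideanSpace ℝ (Fin d)) (μc μH : ℝ)
    (hμc : 0 < μc) (hμH : 0 < μH) (ustar xstar : EuclideanSpace ℝ (Fin d))
    (hHC : HiddenConvex μc μH X U c H F ustar)
    (hxstar : xstar ∈ X) (hcxstar : c xstar = ustar) :
    (∀ x ∈ X, μH * μc ^ 2 / 2 * ‖x - xstar‖ ^ 2 ≤ F x - F xstar) ∧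
      ∀ y ∈ X, (∀ x ∈ X, F y ≤ F x) → y = xstar := by
  have hgrowth : ∀ x ∈ X, μH * μc ^ 2 / 2 * ‖x - xstar‖ ^ 2 ≤ F x - F xstar :=
    fun x hx ↦ hHC.quadratic_growth hμc.le hμH.le hxstar hcxstar hx
  refine ⟨hgrowth, fun y hy hymin ↦ ?_⟩
  have hnonpos : μH * μc ^ 2 / 2 * ‖y - xstar‖ ^ 2 ≤ 0 :=
    (hgrowth y hy).trans (sub_nonpos.2 (hymin xstar hxstar))
  have hnorm : ‖y - xstar‖ ^ 2 = 0 :=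
    le_antisymm (nonpos_of_mul_nonpos_right hnonpos (by positivity)) (sq_nonneg _)
  simpa [sub_eq_zero] using hnorm
end
end

section
/- Let F : ℝ^d → ℝ be ℓ-weakly convex with ℓ > 0 and hidden convex on X with moduli μ_c > 0 and μ_H ≥ 0. Set ρ = 2ℓ and let 0 < η ≤ 1/(2ℓ). Fix x ∈ X, let g be a square-integrable random vector with E[g] ∈ ∂F(x) and E‖g‖² ≤ G_F², and set x⁺ := Π_X(x − η g) and x̂ := prox_{Φ/ρ}(x), where Φ := F + δ_X. Then for every α with 0 < α ≤ ηℓ: E[Φ_{1/ρ}(x⁺)] − F* ≤ (1 − α)(Φ_{1/ρ}(x) − F*) + (3α²/(2μ_c²η) − (1−α)α μ_H/2)‖c(x̂) − c(x*)‖² + 8ℓη²G_F². -/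
open MeasureTheory
open scoped RealInnerProductSpace

noncomputable section

/-- `q` is the Euclidean projection of `p` onto `X`. -/
def IsProjection {d : ℕ} (X : Set (EuclideanSpace ℝ (Fin d))) (p q : EuclideanSpace ℝ (Fin d)) : Prop :=
  q ∈ X ∧ ∀ y ∈ X, ‖q - p‖ ≤ ‖y - p‖

/-- `F` is `ℓ`-weakly convex: `x ↦ F x + ℓ/2 ‖x‖²` is convex on `ℝ^d`. -/
def WeaklyConvex {d : ℕ} (ℓ : ℝ) (F : EuclideanSpace ℝ (Fin d) → ℝ) : Prop :=
  ConvexOn ℝ Set.univ fun x => F x + ℓ / 2 * ‖x‖ ^ 2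

/-- The subdifferential of an `ℓ`-weakly convex function `F` at `x`. -/
def WCSubdiff {d : ℕ} (ℓ : ℝ) (F : EuclideanSpace ℝ (Fin d) → ℝ) (x : EuclideanSpace ℝ (Fin d)) : Set (EuclideanSpace ℝ (Fin d)) :=
  {g | ∀ y, F x + ⟪g, y - x⟫ - ℓ / 2 * ‖y - x‖ ^ 2 ≤ F y}

/-- The Moreau envelope `Φ_{1/ρ}` of `Φ = F + δ_X`. -/
def MoreauEnv {d : ℕ} (X : Set (EuclideanSpace ℝ (Fin d))) (F : EuclideanSpace ℝ (Fin d) → ℝ) (ρ : ℝ) (x : EuclideanSpace ℝ (Fin d)) : ℝ :=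
  sInf ((fun y => F y + ρ / 2 * ‖y - x‖ ^ 2) '' X)

/-- `q = prox_{Φ/ρ}(p)`, i.e. `q` minimizes `y ↦ F y + ρ/2 ‖y - p‖²` over `X`. -/
def IsProx {d : ℕ} (X : Set (EuclideanSpace ℝ (Fin d))) (F : EuclideanSpace ℝ (Fin d) → ℝ) (ρ : ℝ) (p q : EuclideanSpace ℝ (Fin d)) : Prop :=
  q ∈ X ∧ ∀ y ∈ X, F q + ρ / 2 * ‖q - p‖ ^ 2 ≤ F y + ρ / 2 * ‖y - p‖ ^ 2

/-! Compare the envelope at `xplus` with its objective at the point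
`z = c⁻¹((1 - α) c xhat + α c xstar)` of the hidden segment. The projection is nonexpansive and
`z ∈ X`, so `‖z - xplus‖ ≤ ‖x - z - η g‖`; taking expectations and using the subgradient
inequality at `z` gives
`E Φ(xplus) ≤ (1 + 2ηℓ) F z - 2ηℓ F x + ℓ (1 + ηℓ) ‖x - z‖² + ℓ η² GF²`.
Hidden convexity bounds `F z` and gives `μc ‖xhat - z‖ ≤ α ‖c xhat - c xstar‖`; the
`ℓ`-strong convexity of the prox objective gives `F x ≥ F xhat + 3ℓ/2 ‖x - xhat‖²` and
`ℓ ‖x - xhat‖ ≤ ‖E g‖ ≤ GF`; a Young inequality on `‖x - z‖ ≤ ‖x - xhat‖ + ‖xhat - z‖` closes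
the estimate. `Φ` is upper semicontinuous and `Φ(xplus)` is squeezed between `F xstar` and an
integrable quadratic in `g`, so it is integrable. -/

open Filter Topology

variable {d : ℕ} {X : Set (EuclideanSpace ℝ (Fin d))} {F : EuclideanSpace ℝ (Fin d) → ℝ}
  {ℓ ρ m η : ℝ} {p p' q q' v x y z : EuclideanSpace ℝ (Fin d)}

namespace IsProjection

lemma iff_norm_eq_iInf (hq : q ∈ X) : IsProjection X p q ↔ ‖p - q‖ = ⨅ w : X, ‖p - w‖ := by
  have hbdd : BddBelow (Set.range fun w : X => ‖p - w‖) :=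
    ⟨0, Set.forall_mem_range.2 fun _ => norm_nonneg _⟩
  have : Nonempty X := ⟨⟨q, hq⟩⟩
  constructor
  · intro h
    refine le_antisymm (le_ciInf fun w => ?_) (ciInf_le hbdd ⟨q, hq⟩)
    simpa only [norm_sub_rev p] using h.2 w w.2
  · intro h
    refine ⟨hq, fun y hy => ?_⟩
    rw [norm_sub_rev, h, norm_sub_rev]
    exact ciInf_le hbdd ⟨y, hy⟩

lemma inner_sub_nonpos (hX : Convex ℝ X) (h : IsProjection X p q) (hz : z ∈ X) :
    ⟪p - q, z - q⟫ ≤ 0 :=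
  (norm_eq_iInf_iff_real_inner_le_zero hX h.1).1 ((iff_norm_eq_iInf h.1).1 h) z hz

lemma norm_sub_le (hX : Convex ℝ X) (h : IsProjection X p q) (h' : IsProjection X p' q') :
    ‖q - q'‖ ≤ ‖p - p'‖ := by
  have hvi := h.inner_sub_nonpos hX h'.1
  have hvi' := h'.inner_sub_nonpos hX h.1
  have key : ‖q - q'‖ ^ 2 ≤ ⟪p - p', q - q'⟫ := by
    have hsplit : ⟪p - p', q - q'⟫ = ‖q - q'‖ ^ 2 - ⟪p - q, q' - q⟫ - ⟪p' - q', q - q'⟫ := by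
      rw [← real_inner_self_eq_norm_sq]
      simp only [inner_sub_left, inner_sub_right, real_inner_comm q p, real_inner_comm q' p,
        real_inner_comm q' q]
      ring
    linarith
  have hcs := real_inner_le_norm (p - p') (q - q')
  nlinarith [norm_nonneg (q - q'), norm_nonneg (p - p')]

lemma self (hz : z ∈ X) : IsProjection X z z :=
  ⟨hz, fun y _ => by simp⟩

lemma norm_sub_le_of_mem (hX : Convex ℝ X) (h : IsProjection X p q) (hz : z ∈ X) :
    ‖q - z‖ ≤ ‖p - z‖ :=
  h.norm_sub_le hX (self hz)

lemma unique (hX : Convex ℝ X) (h : IsProjection X p q) (h' : IsProjection X p q') : q = q' := by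
  simpa [sub_eq_zero] using h.norm_sub_le hX h'

end IsProjection

lemma exists_lipschitzWith_isProjection (hXne : X.Nonempty) (hXcl : IsClosed X)
    (hXcvx : Convex ℝ X) :
    ∃ P : EuclideanSpace ℝ (Fin d) → EuclideanSpace ℝ (Fin d),
      LipschitzWith 1 P ∧ ∀ p, IsProjection X p (P p) := by
  have hex : ∀ p, ∃ q, IsProjection X p q := fun p => by
    obtain ⟨q, hq, hmin⟩ := exists_norm_eq_iInf_of_complete_convex hXne hXcl.isComplete hXcvx p
    exact ⟨q, (IsProjection.iff_norm_eq_iInf hq).2 hmin⟩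
  choose P hP using hex
  refine ⟨P, LipschitzWith.of_dist_le_mul fun p p' => ?_, hP⟩
  simpa [dist_eq_norm] using (hP p).norm_sub_le hXcvx (hP p')

lemma aestronglyMeasurable_of_isProjection {Ω : Type*} [MeasurableSpace Ω] {μ : Measure Ω}
    (hXne : X.Nonempty) (hXcl : IsClosed X) (hXcvx : Convex ℝ X)
    {u w : Ω → EuclideanSpace ℝ (Fin d)} (hu : AEStronglyMeasurable u μ)
    (hw : ∀ ω, IsProjection X (u ω) (w ω)) : AEStronglyMeasurable w μ := by
  obtain ⟨P, hPlip, hP⟩ := exists_lipschitzWith_isProjection hXne hXcl hXcvx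
  have hwP : w = P ∘ u := funext fun ω => (hw ω).unique hXcvx (hP (u ω))
  rw [hwP]
  exact hPlip.continuous.comp_aestronglyMeasurable hu

lemma StrongConvexOn.add_sq_norm_sub_le_of_isMinOn {E : Type*} [NormedAddCommGroup E]
    [NormedSpace ℝ E] {s : Set E} {m : ℝ} {f : E → ℝ} {x₀ y : E} (hf : StrongConvexOn s m f)
    (hmin : IsMinOn f s x₀) (hx₀ : x₀ ∈ s) (hy : y ∈ s) :
    f x₀ + m / 2 * ‖y - x₀‖ ^ 2 ≤ f y := by
  set r := m / 2 * ‖y - x₀‖ ^ 2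
  have hsmall : ∀ t ∈ Set.Ioc (0 : ℝ) 1, f x₀ ≤ f y - (1 - t) * r := by
    rintro t ⟨ht0, ht1⟩
    have hconv := hf.2 hx₀ hy (sub_nonneg.2 ht1) ht0.le (sub_add_cancel 1 t)
    have hle := hmin (hf.1 hx₀ hy (sub_nonneg.2 ht1) ht0.le (sub_add_cancel 1 t))
    rw [smul_eq_mul, smul_eq_mul, norm_sub_rev] at hconv
    have : t * f x₀ ≤ t * (f y - (1 - t) * r) := by
      linear_combination hle.trans hconv
    exact le_of_mul_le_mul_left this ht0
  have hlim : Tendsto (fun t => f y - (1 - t) * r) (𝓝[>] 0) (𝓝 (f y - r)) := by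
    have hcont : Continuous fun t : ℝ => f y - (1 - t) * r := by fun_prop
    simpa using (hcont.tendsto 0).mono_left nhdsWithin_le_nhds
  have hev : ∀ᶠ t in 𝓝[>] (0 : ℝ), f x₀ ≤ f y - (1 - t) * r :=
    Filter.mem_of_superset (Ioc_mem_nhdsGT one_pos) hsmall
  linarith [ge_of_tendsto hlim hev]

lemma WeaklyConvex.strongConvexOn_add_sq_norm_sub (hF : WeaklyConvex ℓ F)
    {s : Set (EuclideanSpace ℝ (Fin d))} (hs : Convex ℝ s) (ρ : ℝ)
    (p : EuclideanSpace ℝ (Fin d)) :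
    StrongConvexOn s (ρ - ℓ) fun y => F y + ρ / 2 * ‖y - p‖ ^ 2 := by
  rw [strongConvexOn_iff_convex]
  have haff : ConvexOn ℝ s fun y => ⟪-ρ • p, y⟫ + ρ / 2 * ‖p‖ ^ 2 :=
    ((innerSL ℝ (-ρ • p)).toLinearMap.convexOn hs).add_const _
  refine ((hF.subset (Set.subset_univ s) hs).add haff).congr fun y _ => ?_
  simp only [Pi.add_apply, norm_sub_sq_real, real_inner_smul_left, real_inner_comm p y]
  ring

namespace IsProx

lemma add_sq_norm_sub_le (h : IsProx X F ρ p q) (hF : WeaklyConvex ℓ F) (hX : Convex ℝ X)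
    (hy : y ∈ X) :
    F q + ρ / 2 * ‖q - p‖ ^ 2 + (ρ - ℓ) / 2 * ‖y - q‖ ^ 2 ≤ F y + ρ / 2 * ‖y - p‖ ^ 2 :=
  (hF.strongConvexOn_add_sq_norm_sub hX ρ p).add_sq_norm_sub_le_of_isMinOn h.2 h.1 hy

lemma mul_norm_sub_le_norm (h : IsProx X F ρ p q) (hF : WeaklyConvex ℓ F) (hX : Convex ℝ X)
    (hp : p ∈ X) (hv : v ∈ WCSubdiff ℓ F p) : (ρ - ℓ) * ‖q - p‖ ≤ ‖v‖ := by
  have hprox := h.add_sq_norm_sub_le hF hX hp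
  have hsub := hv q
  have hcs := neg_le_of_abs_le (abs_real_inner_le_norm v (q - p))
  rw [sub_self, norm_zero, norm_sub_rev p q] at hprox
  have hsq : (ρ - ℓ) * ‖q - p‖ * ‖q - p‖ ≤ ‖v‖ * ‖q - p‖ := by nlinarith
  rcases (norm_nonneg (q - p)).eq_or_lt with h0 | hpos
  · rw [← h0, mul_zero]
    exact norm_nonneg v
  · exact le_of_mul_le_mul_right hsq hpos

lemma moreauEnv_eq (h : IsProx X F ρ p q) : MoreauEnv X F ρ p = F q + ρ / 2 * ‖q - p‖ ^ 2 :=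
  IsLeast.csInf_eq ⟨⟨q, h.1, rfl⟩, by rintro _ ⟨y, hy, rfl⟩; exact h.2 y hy⟩

end IsProx

lemma moreauEnv_le (hm : ∀ y ∈ X, m ≤ F y) (hρ : 0 ≤ ρ) (p : EuclideanSpace ℝ (Fin d))
    (hz : z ∈ X) : MoreauEnv X F ρ p ≤ F z + ρ / 2 * ‖z - p‖ ^ 2 := by
  refine csInf_le ⟨m, ?_⟩ ⟨z, hz, rfl⟩
  rintro _ ⟨y, hy, rfl⟩
  exact le_add_of_le_of_nonneg (hm y hy) (by positivity)

lemma le_moreauEnv (hX : X.Nonempty) (hm : ∀ y ∈ X, m ≤ F y) (hρ : 0 ≤ ρ)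
    (p : EuclideanSpace ℝ (Fin d)) : m ≤ MoreauEnv X F ρ p := by
  refine le_csInf (hX.image _) ?_
  rintro _ ⟨y, hy, rfl⟩
  exact le_add_of_le_of_nonneg (hm y hy) (by positivity)

lemma upperSemicontinuous_moreauEnv (hX : X.Nonempty) (hm : ∀ y ∈ X, m ≤ F y)
    (hρ : 0 ≤ ρ) : UpperSemicontinuous (MoreauEnv X F ρ) := by
  intro p r hr
  obtain ⟨_, ⟨z, hz, rfl⟩, hzr⟩ := exists_lt_of_csInf_lt (hX.image _) hr
  have hcont : Continuous fun p' => F z + ρ / 2 * ‖z - p'‖ ^ 2 := by fun_prop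
  filter_upwards [hcont.continuousAt.eventually_lt continuousAt_const hzr] with p' hp'
  exact (moreauEnv_le hm hρ p' hz).trans_lt hp'

namespace HiddenConvex

variable {μc μH : ℝ} {U : Set (EuclideanSpace ℝ (Fin d))}
  {c : EuclideanSpace ℝ (Fin d) → EuclideanSpace ℝ (Fin d)}
  {H : EuclideanSpace ℝ (Fin d) → ℝ}
  {ustar xstar : EuclideanSpace ℝ (Fin d)}

lemma apply_le (hHC : HiddenConvex μc μH X U c H F ustar) (hxstar : xstar ∈ X)
    (hcxstar : c xstar = ustar) (hy : y ∈ X) : F xstar ≤ F y := by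
  obtain ⟨-, hbij, -, hFH, -, -, hmin⟩ := hHC
  rw [hFH xstar hxstar, hFH y hy, hcxstar]
  exact hmin _ (hbij.mapsTo hy)

/-- The witness is `z = c⁻¹((1 - α) c x + α c xstar)`. -/
lemma exists_mem_apply_le_and_norm_sub_le (hHC : HiddenConvex μc μH X U c H F ustar)
    (hxstar : xstar ∈ X) (hcxstar : c xstar = ustar) (hx : x ∈ X) {α : ℝ}
    (hα : α ∈ Set.Icc (0 : ℝ) 1) :
    ∃ z ∈ X,
      F z ≤ (1 - α) * F x + α * F xstar - (1 - α) * α * μH / 2 * ‖c x - c xstar‖ ^ 2 ∧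
      μc * ‖x - z‖ ≤ α * ‖c x - c xstar‖ := by
  obtain ⟨hU, hbij, hlow, hFH, hH, hustar, -⟩ := hHC
  have hcx := hbij.mapsTo hx
  obtain ⟨z, hz, hcz⟩ := hbij.surjOn (hU hcx hustar (sub_nonneg.2 hα.2) hα.1 (by ring))
  refine ⟨z, hz, ?_, ?_⟩
  · rw [hFH z hz, hFH x hx, hFH xstar hxstar, hcz, hcxstar]
    exact hH _ hcx _ hustar α hα
  · have hdiff : c x - c z = α • (c x - c xstar) := by rw [hcz, hcxstar]; module
    simpa [hdiff, norm_smul, abs_of_nonneg hα.1] using hlow x hx z hz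

end HiddenConvex

lemma sq_norm_integral_le_integral_sq_norm {Ω E : Type*} [MeasurableSpace Ω] {μ : Measure Ω}
    [IsProbabilityMeasure μ] [NormedAddCommGroup E] [NormedSpace ℝ E] [CompleteSpace E]
    {g : Ω → E} (hg : MemLp g 2 μ) :
    ‖∫ ω, g ω ∂μ‖ ^ 2 ≤ ∫ ω, ‖g ω‖ ^ 2 ∂μ :=
  (convexOn_univ_norm.pow (fun _ _ => norm_nonneg _) 2).map_integral_le (by fun_prop)
    isClosed_univ (by simp) (hg.integrable one_le_two)
    ((memLp_two_iff_integrable_sq_norm hg.aestronglyMeasurable).1 hg)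

section ExpectedStep

lemma moreauEnv_le_of_isProjection (hXcvx : Convex ℝ X) (hm : ∀ y ∈ X, m ≤ F y)
    (hρ : 0 ≤ ρ) (hq : IsProjection X (x - η • v) q) (hz : z ∈ X) :
    MoreauEnv X F ρ q ≤
      F z + ρ / 2 * (‖x - z‖ ^ 2 - 2 * η * ⟪x - z, v⟫ + η ^ 2 * ‖v‖ ^ 2) := by
  have hdist : ‖z - q‖ ≤ ‖(x - z) - η • v‖ := by
    rw [norm_sub_rev, show (x - z) - η • v = x - η • v - z by abel]
    exact hq.norm_sub_le_of_mem hXcvx hz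
  have hexpand :
      ‖(x - z) - η • v‖ ^ 2 = ‖x - z‖ ^ 2 - 2 * η * ⟪x - z, v⟫ + η ^ 2 * ‖v‖ ^ 2 := by
    rw [norm_sub_sq_real, real_inner_smul_right, norm_smul, mul_pow, Real.norm_eq_abs, sq_abs]
    ring
  calc MoreauEnv X F ρ q ≤ F z + ρ / 2 * ‖z - q‖ ^ 2 := moreauEnv_le hm hρ q hz
    _ ≤ F z + ρ / 2 * ‖(x - z) - η • v‖ ^ 2 := by gcongr
    _ = _ := by rw [hexpand]

variable {Ω : Type*} [MeasurableSpace Ω] {μ : Measure Ω} [IsProbabilityMeasure μ]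
  {g xplus : Ω → EuclideanSpace ℝ (Fin d)}

lemma integrable_quadratic_of_memLp (hg : MemLp g 2 μ) (a b c : ℝ) :
    Integrable (fun ω => a + b * (c - 2 * η * ⟪v, g ω⟫ + η ^ 2 * ‖g ω‖ ^ 2)) μ := by
  have hinner : Integrable (fun ω => ⟪v, g ω⟫) μ := (hg.integrable one_le_two).const_inner v
  have hsq := (memLp_two_iff_integrable_sq_norm hg.aestronglyMeasurable).1 hg
  exact (integrable_const a).add
    ((((integrable_const c).sub (hinner.const_mul _)).add (hsq.const_mul _)).const_mul b)

lemma integral_quadratic_of_memLp (hg : MemLp g 2 μ) (a b c : ℝ) :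
    ∫ ω, a + b * (c - 2 * η * ⟪v, g ω⟫ + η ^ 2 * ‖g ω‖ ^ 2) ∂μ
      = a + b * (c - 2 * η * ⟪v, ∫ ω, g ω ∂μ⟫ + η ^ 2 * ∫ ω, ‖g ω‖ ^ 2 ∂μ) := by
  have hinner : Integrable (fun ω => 2 * η * ⟪v, g ω⟫) μ :=
    ((hg.integrable one_le_two).const_inner v).const_mul _
  have hsq : Integrable (fun ω => η ^ 2 * ‖g ω‖ ^ 2) μ :=
    ((memLp_two_iff_integrable_sq_norm hg.aestronglyMeasurable).1 hg).const_mul _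
  have hdiff : Integrable (fun ω => c - 2 * η * ⟪v, g ω⟫) μ :=
    (integrable_const c).sub hinner
  have hsum : Integrable (fun ω => b * (c - 2 * η * ⟪v, g ω⟫ + η ^ 2 * ‖g ω‖ ^ 2)) μ :=
    (hdiff.add hsq).const_mul b
  rw [integral_add (integrable_const a) hsum, integral_const_mul, integral_add hdiff hsq,
    integral_sub (integrable_const c) hinner, integral_const_mul, integral_const_mul,
    integral_inner (hg.integrable one_le_two)]
  simp

lemma integral_moreauEnv_le (hXne : X.Nonempty) (hXcl : IsClosed X) (hXcvx : Convex ℝ X)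
    (hm : ∀ y ∈ X, m ≤ F y) (hρ : 0 ≤ ρ) (hx : x ∈ X) (hz : z ∈ X) (hg : MemLp g 2 μ)
    (hxplus : ∀ ω, IsProjection X (x - η • g ω) (xplus ω)) :
    ∫ ω, MoreauEnv X F ρ (xplus ω) ∂μ ≤ F z + ρ / 2 * (‖x - z‖ ^ 2
      - 2 * η * ⟪x - z, ∫ ω, g ω ∂μ⟫ + η ^ 2 * ∫ ω, ‖g ω‖ ^ 2 ∂μ) := by
  have hmeas : AEStronglyMeasurable (fun ω => MoreauEnv X F ρ (xplus ω)) μ :=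
    ((upperSemicontinuous_moreauEnv hXne hm hρ).measurable.comp_aemeasurable
      (aestronglyMeasurable_of_isProjection hXne hXcl hXcvx
        (aestronglyMeasurable_const.sub (hg.aestronglyMeasurable.const_smul η))
        hxplus).aemeasurable).aestronglyMeasurable
  have hint : Integrable (fun ω => MoreauEnv X F ρ (xplus ω)) μ :=
    integrable_of_le_of_le hmeas (ae_of_all _ fun ω => le_moreauEnv hXne hm hρ (xplus ω))
      (ae_of_all _ fun ω => moreauEnv_le_of_isProjection hXcvx hm hρ (hxplus ω) hx)
      (integrable_const m) (integrable_quadratic_of_memLp hg _ _ _)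
  refine (integral_mono hint (integrable_quadratic_of_memLp (v := x - z) hg _ _ _)
    fun ω => moreauEnv_le_of_isProjection hXcvx hm hρ (hxplus ω) hz).trans_eq ?_
  exact integral_quadratic_of_memLp hg _ _ _

lemma integral_moreauEnv_le_of_mem_wcSubdiff {G : ℝ} (hXne : X.Nonempty) (hXcl : IsClosed X)
    (hXcvx : Convex ℝ X) (hm : ∀ y ∈ X, m ≤ F y)
    (hℓ : 0 ≤ ℓ) (hη : 0 ≤ η) (hx : x ∈ X) (hz : z ∈ X) (hg : MemLp g 2 μ)
    (hmean : ∫ ω, g ω ∂μ ∈ WCSubdiff ℓ F x) (hG : ∫ ω, ‖g ω‖ ^ 2 ∂μ ≤ G ^ 2)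
    (hxplus : ∀ ω, IsProjection X (x - η • g ω) (xplus ω)) :
    ∫ ω, MoreauEnv X F (2 * ℓ) (xplus ω) ∂μ ≤
      (1 + 2 * η * ℓ) * F z - 2 * η * ℓ * F x + ℓ * (1 + η * ℓ) * ‖x - z‖ ^ 2
        + ℓ * η ^ 2 * G ^ 2 := by
  have hstep := integral_moreauEnv_le (ρ := 2 * ℓ) hXne hXcl hXcvx hm (by positivity) hx hz hg
    hxplus
  have hsub : F x - ⟪x - z, ∫ ω, g ω ∂μ⟫ - ℓ / 2 * ‖x - z‖ ^ 2 ≤ F z := by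
    have := hmean z
    rwa [← neg_sub x z, inner_neg_right, real_inner_comm, norm_neg, ← sub_eq_add_neg] at this
  linarith [mul_le_mul_of_nonneg_left hsub (by positivity : (0 : ℝ) ≤ 2 * η * ℓ),
    mul_le_mul_of_nonneg_left hG (by positivity : (0 : ℝ) ≤ ℓ * η ^ 2)]

end ExpectedStep

/-- Young's inequality `4e(1+e)ab ≤ 2e²(1+6e)a² + 2(1+e)²b²/(1+6e)`, together with
`2(1+e)² ≤ (1+6e)(3-2e-2e²)` for `e ≤ 1/2`. -/
lemma two_mul_one_add_mul_sq_add_le {e α a b : ℝ} (he0 : 0 < e) (he2 : e ≤ 1 / 2)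
    (hα : α ≤ e) :
    2 * e * (1 + e) * (a + b) ^ 2 ≤ 2 * e * (1 - α + 3 * e + 7 * e ^ 2) * a ^ 2 + 3 * b ^ 2 := by
  have hcoef : 0 ≤ (3 - 2 * e - 2 * e ^ 2) * (1 + 6 * e) - 2 * (1 + e) ^ 2 := by nlinarith
  have hyoung : 0 ≤ 2 * e ^ 2 * (1 + 6 * e) * a ^ 2 - 4 * e * (1 + e) * (a * b)
      + (3 - 2 * e - 2 * e ^ 2) * b ^ 2 := by
    refine nonneg_of_mul_nonneg_right ?_ (by positivity : (0 : ℝ) < 1 + 6 * e)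
    nlinarith [sq_nonneg (e * (1 + 6 * e) * a - (1 + e) * b), mul_nonneg hcoef (sq_nonneg b)]
  nlinarith [mul_nonneg he0.le (mul_nonneg (sub_nonneg.2 hα) (sq_nonneg a)),
    mul_nonneg (pow_pos he0 3).le (sq_nonneg a)]

lemma mul_one_add_mul_sq_le_of_le_add {ℓ η α μc a b r D : ℝ} (hℓ : 0 < ℓ) (hη : 0 < η)
    (hηℓ : η * ℓ ≤ 1 / 2) (hα : α ≤ η * ℓ) (hμc : 0 < μc) (hr : 0 ≤ r) (hb : 0 ≤ b)
    (hbD : μc * b ≤ α * D) (hrab : r ≤ a + b) :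
    ℓ * (1 + η * ℓ) * r ^ 2 ≤ (1 - α + 3 * (η * ℓ)) * (ℓ * a ^ 2)
      + 3 * α ^ 2 / (2 * μc ^ 2 * η) * D ^ 2 + 7 * ℓ * η ^ 2 * (ℓ ^ 2 * a ^ 2) := by
  have hyoung := two_mul_one_add_mul_sq_add_le (a := a) (b := b) (mul_pos hη hℓ) hηℓ hα
  have hr2 : r ^ 2 ≤ (a + b) ^ 2 := pow_le_pow_left₀ hr hrab 2
  have hb2 : (μc * b) ^ 2 ≤ (α * D) ^ 2 := pow_le_pow_left₀ (by positivity) hbD 2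
  have hscale :
      2 * η * (3 * α ^ 2 / (2 * μc ^ 2 * η) * D ^ 2) * μc ^ 2 = 3 * (α * D) ^ 2 := by
    field_simp
  refine le_of_mul_le_mul_left ?_ (by positivity : (0 : ℝ) < 2 * η * μc ^ 2)
  nlinarith [mul_le_mul_of_nonneg_left hr2 (by positivity : (0 : ℝ) ≤ 2 * η * ℓ * (1 + η * ℓ)),
    hscale]

/-- Theorem 4.2: one-step descent of the Moreau envelope for the stochastic subgradient
method under hidden convexity. -/
theorem sgm_one_step_descent {d : ℕ}
    {Ω : Type} [MeasurableSpace Ω] (μ : Measure Ω) [IsProbabilityMeasure μ]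
    (X U : Set (EuclideanSpace ℝ (Fin d))) (hXne : X.Nonempty) (hXcl : IsClosed X) (hXcvx : Convex ℝ X)
    (F H : EuclideanSpace ℝ (Fin d) → ℝ) (c : EuclideanSpace ℝ (Fin d) → EuclideanSpace ℝ (Fin d)) (μc μH ℓ ρ η GF : ℝ)
    (hμc : 0 < μc) (hμH : 0 ≤ μH) (hℓ : 0 < ℓ) (ustar xstar : EuclideanSpace ℝ (Fin d))
    (hHC : HiddenConvex μc μH X U c H F ustar)
    (hWC : WeaklyConvex ℓ F)
    (hxstar : xstar ∈ X) (hcxstar : c xstar = ustar)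
    (hρ : ρ = 2 * ℓ) (hη0 : 0 < η) (hη : η ≤ 1 / (2 * ℓ))
    (x : EuclideanSpace ℝ (Fin d)) (hx : x ∈ X)
    (g : Ω → EuclideanSpace ℝ (Fin d)) (hg2 : MemLp g 2 μ)
    (hmean : (∫ ω, g ω ∂μ) ∈ WCSubdiff ℓ F x)
    (hGF : (∫ ω, ‖g ω‖ ^ 2 ∂μ) ≤ GF ^ 2)
    (xplus : Ω → EuclideanSpace ℝ (Fin d)) (hxplus : ∀ ω, IsProjection X (x - η • g ω) (xplus ω))
    (xhat : EuclideanSpace ℝ (Fin d)) (hxhat : IsProx X F ρ x xhat) :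
    ∀ α : ℝ, 0 < α → α ≤ η * ℓ →
      (∫ ω, MoreauEnv X F ρ (xplus ω) ∂μ) - F xstar ≤
        (1 - α) * (MoreauEnv X F ρ x - F xstar)
          + (3 * α ^ 2 / (2 * μc ^ 2 * η) - (1 - α) * α * μH / 2) * ‖c xhat - c xstar‖ ^ 2
          + 8 * ℓ * η ^ 2 * GF ^ 2 := by
  intro α hα0 hαη
  subst hρ
  rw [hxhat.moreauEnv_eq]
  have hηℓ : η * ℓ ≤ 1 / 2 := by
    rw [le_div_iff₀ (by positivity)] at hη
    linarith
  have hmin : ∀ y ∈ X, F xstar ≤ F y := fun y hy => hHC.apply_le hxstar hcxstar hy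
  obtain ⟨z, hz, hFz, hzdist⟩ := hHC.exists_mem_apply_le_and_norm_sub_le hxstar hcxstar
    hxhat.1 ⟨hα0.le, by linarith⟩
  have hstep := integral_moreauEnv_le_of_mem_wcSubdiff hXne hXcl hXcvx hmin hℓ.le hη0.le hx hz
    hg2 hmean hGF hxplus
  have hprox := hxhat.add_sq_norm_sub_le hWC hXcvx hx
  rw [sub_self, norm_zero, norm_sub_rev x xhat] at hprox
  have hgrad : ℓ ^ 2 * ‖xhat - x‖ ^ 2 ≤ GF ^ 2 := by
    have h1 := hxhat.mul_norm_sub_le_norm hWC hXcvx hx hmean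
    rw [show 2 * ℓ - ℓ = ℓ by ring] at h1
    nlinarith [sq_norm_integral_le_integral_sq_norm hg2, mul_nonneg hℓ.le (norm_nonneg (xhat - x))]
  have htri : ‖x - z‖ ≤ ‖xhat - x‖ + ‖xhat - z‖ := by
    simpa only [norm_sub_rev x xhat] using norm_sub_le_norm_sub_add_norm_sub x xhat z
  have hcore := mul_one_add_mul_sq_le_of_le_add hℓ hη0 hηℓ hαη hμc (norm_nonneg (x - z))
    (norm_nonneg (xhat - z)) hzdist htri
  have he : 0 ≤ η * ℓ := by positivity
  linarith [mul_le_mul_of_nonneg_left hFz (by positivity : (0 : ℝ) ≤ 1 + 2 * η * ℓ),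
    mul_le_mul_of_nonneg_left hprox (by positivity : (0 : ℝ) ≤ 2 * η * ℓ),
    mul_le_mul_of_nonneg_left hgrad (by positivity : (0 : ℝ) ≤ 7 * ℓ * η ^ 2),
    mul_nonneg (mul_nonneg he hα0.le) (sub_nonneg.2 (hmin xhat hxhat.1)),
    mul_nonneg (mul_nonneg (mul_nonneg he (by linarith : (0 : ℝ) ≤ 1 - α)) hα0.le)
      (mul_nonneg hμH (sq_nonneg ‖c xhat - c xstar‖))]
end
end

section
/- Let F : ℝ^d → ℝ be differentiable with ‖∇F(x) − ∇F(y)‖ ≤ L‖x − y‖ for all x, y ∈ ℝ^d (L > 0), let β ∈ (0,1], let x, x⁺, g ∈ ℝ^d be fixed, and let G be a square-integrable random vector with E[G] = ∇F(x⁺) and E‖G − ∇F(x⁺)‖² ≤ σ². Define g⁺ := (1 − β) g + β G. Then E‖g⁺ − ∇F(x⁺)‖² ≤ (1 − β)‖g − ∇F(x)‖² + (3L²/β)‖x − x⁺‖² + β² σ². -/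
/-!
Write `c = ∇F(x⁺)`. Then `g⁺ - c = (1 - β)(g - c) + β(G - c)`, and since `G - c` has mean zero the
cross term vanishes in expectation, leaving `(1 - β)²‖g - c‖² + β² E‖G - c‖²`. By Lipschitz continuity
`‖g - c‖ ≤ ‖g - ∇F(x)‖ + L‖x - x⁺‖`, and Young's inequality with weight `β` absorbs the factor
`(1 - β)²` into `1 - β` on the first term and `2/β ≤ 3/β` on the second.
-/

open MeasureTheory
open scoped RealInnerProductSpace

noncomputable section

theorem integral_norm_add_sq_of_integral_eq_zero {E Ω : Type*} [NormedAddCommGroup E]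
    [InnerProductSpace ℝ E] [CompleteSpace E] [MeasurableSpace Ω] {μ : Measure Ω}
    [IsProbabilityMeasure μ]
    (a : E) {X : Ω → E} (hX : MemLp X 2 μ) (hX0 : ∫ ω, X ω ∂μ = 0) :
    ∫ ω, ‖a + X ω‖ ^ 2 ∂μ = ‖a‖ ^ 2 + ∫ ω, ‖X ω‖ ^ 2 ∂μ := by
  have hXint : Integrable X μ := hX.integrable one_le_two
  have hinner : Integrable (fun ω => 2 * ⟪a, X ω⟫) μ :=
    ((innerSL ℝ a).integrable_comp hXint).const_mul 2
  have hcross : ∫ ω, 2 * ⟪a, X ω⟫ ∂μ = 0 := by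
    rw [integral_const_mul, integral_inner hXint, hX0, inner_zero_right, mul_zero]
  simp_rw [norm_add_sq_real]
  rw [integral_add (f := fun ω => ‖a‖ ^ 2 + 2 * ⟪a, X ω⟫) ((integrable_const _).add hinner)
      hX.norm.integrable_sq,
    integral_add (integrable_const _) hinner, hcross, integral_const]
  simp

theorem one_sub_sq_mul_sq_le_of_le_add {β u v e : ℝ} (hβ0 : 0 < β) (hβ1 : β ≤ 1)
    (hv : 0 ≤ v) (h : v ≤ u + e) :
    (1 - β) ^ 2 * v ^ 2 ≤ (1 - β) * u ^ 2 + 2 / β * e ^ 2 := by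
  have young : v ^ 2 ≤ (1 + β) * u ^ 2 + (1 + 1 / β) * e ^ 2 := by
    have hsq : v ^ 2 ≤ (u + e) ^ 2 := pow_le_pow_left₀ hv h 2
    have hcross : 2 * u * e ≤ β * u ^ 2 + 1 / β * e ^ 2 := by
      have hsq_nonneg : 0 ≤ β * (u - e / β) ^ 2 := by positivity
      have expand : β * (u - e / β) ^ 2 = β * u ^ 2 - 2 * u * e + 1 / β * e ^ 2 := by
        field_simp
        ring
      linarith
    nlinarith
  have hβ' : 0 ≤ 1 - β := by linarith
  calc (1 - β) ^ 2 * v ^ 2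
      ≤ (1 - β) ^ 2 * ((1 + β) * u ^ 2 + (1 + 1 / β) * e ^ 2) := by gcongr
    _ = (1 - β) * (1 - β ^ 2) * u ^ 2 + (1 - β) ^ 2 * (1 + β) / β * e ^ 2 := by
      field_simp
      ring
    _ ≤ (1 - β) * u ^ 2 + 2 / β * e ^ 2 := by
      have h1 : (1 - β) * (1 - β ^ 2) ≤ 1 - β := by nlinarith
      have h2 : (1 - β) ^ 2 * (1 + β) ≤ 2 := by nlinarith
      gcongr

theorem momentum_error_recursion_general {d : ℕ}
    {Ω : Type} [MeasurableSpace Ω] (μ : Measure Ω) [IsProbabilityMeasure μ]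
    (F' : EuclideanSpace ℝ (Fin d) → EuclideanSpace ℝ (Fin d)) (L σ β : ℝ)
    (hLip : ∀ u v : EuclideanSpace ℝ (Fin d), ‖F' u - F' v‖ ≤ L * ‖u - v‖)
    (hβ : β ∈ Set.Ioc (0 : ℝ) 1)
    (x xplus g : EuclideanSpace ℝ (Fin d))
    (G : Ω → EuclideanSpace ℝ (Fin d)) (hG2 : MemLp G 2 μ)
    (hmean : (∫ ω, G ω ∂μ) = F' xplus)
    (hvarG : (∫ ω, ‖G ω - F' xplus‖ ^ 2 ∂μ) ≤ σ ^ 2) :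
    (∫ ω, ‖(1 - β) • g + β • G ω - F' xplus‖ ^ 2 ∂μ) ≤
      (1 - β) * ‖g - F' x‖ ^ 2 + 3 * L ^ 2 / β * ‖x - xplus‖ ^ 2 + β ^ 2 * σ ^ 2 := by
  obtain ⟨hβ0, hβ1⟩ := hβ
  set c := F' xplus
  have hnoise : MemLp (fun ω => β • (G ω - c)) 2 μ := (hG2.sub (memLp_const c)).const_smul β
  have hnoise_mean : ∫ ω, β • (G ω - c) ∂μ = 0 := by
    rw [integral_smul, integral_sub (hG2.integrable one_le_two) (integrable_const c), hmean,
      integral_const, probReal_univ, one_smul, sub_self, smul_zero]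
  have hsplit : ∀ ω, (1 - β) • g + β • G ω - c = (1 - β) • (g - c) + β • (G ω - c) := fun ω => by
    module
  have hbias : ‖g - c‖ ≤ ‖g - F' x‖ + L * ‖x - xplus‖ := by
    calc ‖g - c‖ ≤ ‖g - F' x‖ + ‖F' x - c‖ := norm_sub_le_norm_sub_add_norm_sub _ _ _
      _ ≤ ‖g - F' x‖ + L * ‖x - xplus‖ := by gcongr; exact hLip x xplus
  have hbias_sq := one_sub_sq_mul_sq_le_of_le_add hβ0 hβ1 (norm_nonneg _) hbias
  simp_rw [hsplit]
  rw [integral_norm_add_sq_of_integral_eq_zero _ hnoise hnoise_mean]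
  simp only [norm_smul, mul_pow, Real.norm_eq_abs, sq_abs]
  rw [integral_const_mul]
  have hconst : 2 / β * (L * ‖x - xplus‖) ^ 2 ≤ 3 * L ^ 2 / β * ‖x - xplus‖ ^ 2 := by
    rw [show 3 * L ^ 2 / β * ‖x - xplus‖ ^ 2 = 3 / β * (L * ‖x - xplus‖) ^ 2 by ring]
    gcongr
    norm_num
  linarith [mul_le_mul_of_nonneg_left hvarG (sq_nonneg β)]

/-- Lemma 6.1 (momentum error recursion): one-step error control for the Polyak heavy-ball
gradient estimator. -/
theorem momentum_error_recursion {d : ℕ}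
    {Ω : Type} [MeasurableSpace Ω] (μ : Measure Ω) [IsProbabilityMeasure μ]
    (F : EuclideanSpace ℝ (Fin d) → ℝ) (F' : EuclideanSpace ℝ (Fin d) → EuclideanSpace ℝ (Fin d)) (L σ β : ℝ) (hL : 0 < L)
    (hgrad : ∀ y, HasGradientAt F (F' y) y)
    (hLip : ∀ u v : EuclideanSpace ℝ (Fin d), ‖F' u - F' v‖ ≤ L * ‖u - v‖)
    (hβ : β ∈ Set.Ioc (0 : ℝ) 1)
    (x xplus g : EuclideanSpace ℝ (Fin d))
    (G : Ω → EuclideanSpace ℝ (Fin d)) (hG2 : MemLp G 2 μ)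
    (hmean : (∫ ω, G ω ∂μ) = F' xplus)
    (hvarG : (∫ ω, ‖G ω - F' xplus‖ ^ 2 ∂μ) ≤ σ ^ 2) :
    (∫ ω, ‖(1 - β) • g + β • G ω - F' xplus‖ ^ 2 ∂μ) ≤
      (1 - β) * ‖g - F' x‖ ^ 2 + 3 * L ^ 2 / β * ‖x - xplus‖ ^ 2 + β ^ 2 * σ ^ 2 :=
  momentum_error_recursion_general μ F' L σ β hLip hβ x xplus g G hG2 hmean hvarG
end
end
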